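/- arXiv:1906.06824 — 4 statements merged into one kernel-verified Lean document; each statement's English description precedes it below -/
import Mathlib

section
/- Let n be a finite type, Q : Matrix n n ℂ, and σ a permutation of n whose permutation matrix P_σ (over ℂ) satisfies P_σ * Q = Q * P_σ. Then spectralRadius ℂ (P_σ * Q) = spectralRadius ℂ Q; that is, twisting a quiver by an automorphism does not change the spectral radius of its adjacency matrix. -/
/-!
If `σ` has order `m`, then `P_σ ^ m = 1`, so `(P_σ * Q) ^ m = Q ^ m` as the two factors commute.
Over an algebraically closed field the spectral mapping theorem gives `ρ (a ^ m) = ρ a ^ m`,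
and `m`-th roots are unique in `[0, ∞]`, so `ρ (P_σ * Q) = ρ Q`.
-/

open Matrix

/-- The permutation matrix of a permutation `σ`: `(P_σ) i j = 1` if `j = σ i`, else `0`. -/
def permMat {V : Type*} [DecidableEq V] (R : Type*) [Zero R] [One R]
    (σ : Equiv.Perm V) : Matrix V V R :=
  Matrix.of fun i j => if j = σ i then 1 else 0

namespace spectrum

variable {𝕜 A : Type*} [NormedField 𝕜] [IsAlgClosed 𝕜] [Ring A] [Algebra 𝕜 A]

theorem spectralRadius_pow_of_ne_zero (a : A) {n : ℕ} (hn : n ≠ 0) :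
    spectralRadius 𝕜 (a ^ n) = spectralRadius 𝕜 a ^ n := by
  refine le_antisymm ?_ (spectralRadius_pow_le a n hn)
  simp only [spectralRadius, map_pow_of_pos a (Nat.pos_of_ne_zero hn), iSup_image,
    ENNReal.iSup₂_pow_of_ne_zero _ hn, nnnorm_pow, ENNReal.coe_pow, le_refl]

theorem spectralRadius_eq_of_pow_eq_pow {a b : A} {n : ℕ} (hn : n ≠ 0) (h : a ^ n = b ^ n) :
    spectralRadius 𝕜 a = spectralRadius 𝕜 b :=
  (ENNReal.pow_right_strictMono hn).injective <| by
    simp only [← spectralRadius_pow_of_ne_zero _ hn, h]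

theorem spectralRadius_mul_eq_of_isOfFinOrder {p a : A} (hp : IsOfFinOrder p)
    (hpa : Commute p a) : spectralRadius 𝕜 (p * a) = spectralRadius 𝕜 a := by
  obtain ⟨n, hn, hpn⟩ := isOfFinOrder_iff_pow_eq_one.mp hp
  exact spectralRadius_eq_of_pow_eq_pow hn.ne' (by rw [hpa.mul_pow, hpn, one_mul])

end spectrum

theorem permMat_eq_permMatrix {V R : Type*} [DecidableEq V] [Zero R] [One R]
    (σ : Equiv.Perm V) : permMat R σ = σ.permMatrix R := by
  ext i j
  simp [permMat, PEquiv.toMatrix_apply, eq_comm]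

theorem Matrix.isOfFinOrder_permMatrix {V R : Type*} [Fintype V] [DecidableEq V] [Semiring R]
    (σ : Equiv.Perm V) : IsOfFinOrder (σ.permMatrix R) := by
  simpa using (permMatrixHom (R := R)).isOfFinOrder (isOfFinOrder_of_finite σ⁻¹)

/-- Twisting a quiver by an automorphism does not change the spectral radius of its
adjacency matrix: if `P_σ` commutes with `Q`, then `ρ(P_σ * Q) = ρ(Q)`. -/
theorem spectralRadius_twist_eq
    {n : Type*} [Fintype n] [DecidableEq n]
    (Q : Matrix n n ℂ) (σ : Equiv.Perm n)
    (hcomm : permMat ℂ σ * Q = Q * permMat ℂ σ) :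
    spectralRadius ℂ (permMat ℂ σ * Q) = spectralRadius ℂ Q := by
  rw [permMat_eq_permMatrix] at hcomm ⊢
  exact spectrum.spectralRadius_mul_eq_of_isOfFinOrder (isOfFinOrder_permMatrix σ) hcomm
end

section
/- Let n be a nonempty finite type and Q : Matrix n n ℝ a symmetric matrix (Qᵀ = Q) with all entries nonnegative. Suppose there exist r : ℝ and a vector v : n → ℝ with v i > 0 for all i such that Q.mulVec v = r • v. Then the spectral radius of Q regarded as a complex matrix equals r, i.e., spectralRadius ℂ (Q.map (↑· : ℝ → ℂ)) = ENNReal.ofReal r. -/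
/-!
`r` lies in the spectrum because `v` is an eigenvector. Conversely, if `Q w = μ w` with `w ≠ 0`,
the triangle inequality gives `‖μ‖ |w| ≤ Q |w|` entrywise. Scale `v` to the smallest multiple
`t v` that dominates `|w|`; it touches `|w|` at some index `i`, and there
`‖μ‖ |w i| ≤ (Q |w|) i ≤ t (Q v) i = r t v i = r |w i|`, so `‖μ‖ ≤ r`.
-/

open Matrix

namespace Matrix

variable {n : Type*} [Fintype n]

theorem mem_spectrum_iff_exists_mulVec_eq_smul {K : Type*} [Field K] [DecidableEq n]
    (A : Matrix n n K) (μ : K) :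
    μ ∈ spectrum K A ↔ ∃ w ≠ 0, A *ᵥ w = μ • w := by
  rw [← spectrum_toLin', ← Module.End.hasEigenvalue_iff_mem_spectrum,
    Module.End.hasEigenvalue_iff, Submodule.ne_bot_iff]
  simp only [Module.End.mem_eigenspace_iff, toLin'_apply]
  exact ⟨fun ⟨w, hw, hw0⟩ => ⟨w, hw0, hw⟩, fun ⟨w, hw0, hw⟩ => ⟨w, hw, hw0⟩⟩

theorem mulVec_mono_of_nonneg {Q : Matrix n n ℝ} (hQ : ∀ i j, 0 ≤ Q i j) {x y : n → ℝ}
    (hxy : x ≤ y) : Q *ᵥ x ≤ Q *ᵥ y := fun i =>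
  Finset.sum_le_sum fun j _ => mul_le_mul_of_nonneg_left (hxy j) (hQ i j)

theorem norm_map_ofReal_mulVec_le {Q : Matrix n n ℝ} (hQ : ∀ i j, 0 ≤ Q i j) (w : n → ℂ)
    (i : n) : ‖(Q.map (fun x => (x : ℂ)) *ᵥ w) i‖ ≤ (Q *ᵥ fun j => ‖w j‖) i :=
  calc ‖∑ j, (Q i j : ℂ) * w j‖ ≤ ∑ j, ‖(Q i j : ℂ) * w j‖ := norm_sum_le _ _
    _ = ∑ j, Q i j * ‖w j‖ := by
      simp only [norm_mul, Complex.norm_real, Real.norm_of_nonneg (hQ i _)]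

theorem le_of_smul_le_mulVec_of_pos_eigenvector {Q : Matrix n n ℝ} (hQ : ∀ i j, 0 ≤ Q i j)
    {r : ℝ} {v : n → ℝ} (hv : ∀ i, 0 < v i) (heig : Q *ᵥ v = r • v)
    {c : ℝ} {u : n → ℝ} (hu : 0 ≤ u) (hu0 : u ≠ 0) (hcu : c • u ≤ Q *ᵥ u) : c ≤ r := by
  obtain ⟨k, huk⟩ := Function.ne_iff.mp hu0
  obtain ⟨i, -, hi⟩ := Finset.exists_max_image Finset.univ (fun j => u j / v j)
    ⟨k, Finset.mem_univ k⟩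
  set t := u i / v i
  have hut : u ≤ t • v := fun j => by
    simpa [div_le_iff₀ (hv j)] using hi j (Finset.mem_univ j)
  have hui : 0 < u i := (div_pos_iff_of_pos_right (hv i)).mp <|
    (div_pos ((hu k).lt_of_ne' huk) (hv k)).trans_le (hi k (Finset.mem_univ k))
  have hcr : c * u i ≤ r * u i := calc
    c * u i ≤ (Q *ᵥ u) i := hcu i
    _ ≤ (Q *ᵥ (t • v)) i := mulVec_mono_of_nonneg hQ hut i
    _ = r * u i := by
      rw [mulVec_smul, heig, smul_smul, Pi.smul_apply, smul_eq_mul, mul_comm t r, mul_assoc,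
        div_mul_cancel₀ _ (hv i).ne']
  exact le_of_mul_le_mul_right hcr hui

theorem norm_le_of_mulVec_eq_smul_of_pos_eigenvector {Q : Matrix n n ℝ}
    (hQ : ∀ i j, 0 ≤ Q i j) {r : ℝ} {v : n → ℝ} (hv : ∀ i, 0 < v i) (heig : Q *ᵥ v = r • v)
    {μ : ℂ} {w : n → ℂ} (hw0 : w ≠ 0) (hw : Q.map (fun x => (x : ℂ)) *ᵥ w = μ • w) :
    ‖μ‖ ≤ r := by
  refine le_of_smul_le_mulVec_of_pos_eigenvector hQ hv heig (u := fun j => ‖w j‖)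
    (fun j => norm_nonneg _) (fun h => hw0 (funext fun j => norm_eq_zero.mp (congrFun h j)))
    fun i => ?_
  simpa [hw, norm_mul] using norm_map_ofReal_mulVec_le hQ w i

theorem ofReal_mem_spectrum_map_ofReal [DecidableEq n] [Nonempty n] {Q : Matrix n n ℝ}
    {r : ℝ} {v : n → ℝ} (hv : ∀ i, 0 < v i) (heig : Q *ᵥ v = r • v) :
    (r : ℂ) ∈ spectrum ℂ (Q.map fun x => (x : ℂ)) := by
  refine (mem_spectrum_iff_exists_mulVec_eq_smul _ _).mpr
    ⟨fun i => v i, ?_, funext fun i => ?_⟩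
  · obtain ⟨i⟩ := ‹Nonempty n›
    exact Function.ne_iff.mpr ⟨i, Complex.ofReal_ne_zero.mpr (hv i).ne'⟩
  · exact (RingHom.map_mulVec Complex.ofRealHom Q v i).symm.trans (by simp [heig])

end Matrix

theorem spectralRadius_eq_enorm_of_forall_norm_le {𝕜 A : Type*} [NormedField 𝕜] [Ring A]
    [Algebra 𝕜 A] {a : A} {μ₀ : 𝕜} (hμ₀ : μ₀ ∈ spectrum 𝕜 a)
    (hle : ∀ μ ∈ spectrum 𝕜 a, ‖μ‖ ≤ ‖μ₀‖) : spectralRadius 𝕜 a = ‖μ₀‖ₑ :=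
  le_antisymm (iSup₂_le fun μ hμ => enorm_le_iff_norm_le.mpr (hle μ hμ))
    (le_iSup₂ (f := fun μ _ => ‖μ‖ₑ) μ₀ hμ₀)

theorem spectralRadius_eq_of_positive_eigenvector_general
    {n : Type*} [Fintype n] [DecidableEq n] [Nonempty n]
    (Q : Matrix n n ℝ) (hnonneg : ∀ i j, 0 ≤ Q i j)
    (r : ℝ) (v : n → ℝ) (hv : ∀ i, 0 < v i)
    (heig : Q.mulVec v = r • v) :
    spectralRadius ℂ (Q.map (fun x => (x : ℂ))) = ENNReal.ofReal r := by
  have hr := ofReal_mem_spectrum_map_ofReal hv heig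
  have hle : ∀ μ ∈ spectrum ℂ (Q.map fun x => (x : ℂ)), ‖μ‖ ≤ r := fun μ hμ => by
    obtain ⟨w, hw0, hw⟩ := (mem_spectrum_iff_exists_mulVec_eq_smul _ _).mp hμ
    exact norm_le_of_mulVec_eq_smul_of_pos_eigenvector hnonneg hv heig hw0 hw
  have hnorm : ‖(r : ℂ)‖ = r :=
    le_antisymm (hle _ hr) (by rw [Complex.norm_real]; exact Real.le_norm_self r)
  rw [spectralRadius_eq_enorm_of_forall_norm_le hr fun μ hμ => (hle μ hμ).trans hnorm.ge,
    ← ofReal_norm, hnorm]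

/-- Perron–Frobenius-type fact: a symmetric real matrix with nonnegative entries that has
an eigenvector with strictly positive entries and eigenvalue `r` has spectral radius `r`
(as a complex matrix). -/
theorem spectralRadius_eq_of_positive_eigenvector
    {n : Type*} [Fintype n] [DecidableEq n] [Nonempty n]
    (Q : Matrix n n ℝ) (hsym : Qᵀ = Q) (hnonneg : ∀ i j, 0 ≤ Q i j)
    (r : ℝ) (v : n → ℝ) (hv : ∀ i, 0 < v i)
    (heig : Q.mulVec v = r • v) :
    spectralRadius ℂ (Q.map (fun x => (x : ℂ))) = ENNReal.ofReal r :=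
  spectralRadius_eq_of_positive_eigenvector_general Q hnonneg r v hv heig
end

section
/- Let n be a nonempty finite type, r : ℝ, and Q : Matrix n n ℝ a matrix with all entries nonnegative such that every row sum equals r, i.e., ∑ j, Q i j = r for every i. Then the spectral radius of Q regarded as a complex matrix equals r, i.e., spectralRadius ℂ (Q.map (↑· : ℝ → ℂ)) = ENNReal.ofReal r. -/
open Matrix

lemma norm_le_of_eigen {n : Type*} [Fintype n] [Nonempty n]
    (r : ℝ) (Q : Matrix n n ℝ) (hnonneg : ∀ i j, 0 ≤ Q i j)
    (hrow : ∀ i, ∑ j, Q i j = r) (μ : ℂ) (v : n → ℂ) (hv : v ≠ 0)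
    (heq : (Q.map (fun x => (x : ℂ))).mulVec v = μ • v) : ‖μ‖ ≤ r := by
  obtain ⟨i, hi⟩ := Finset.exists_max_image Finset.univ (fun j => ‖v j‖) ⟨Classical.arbitrary n, Finset.mem_univ _⟩
  have hvi : 0 < ‖v i‖ := by
    rcases Function.ne_iff.mp hv with ⟨j, hj⟩
    exact lt_of_lt_of_le (norm_pos_iff.mpr hj) (hi.2 j (Finset.mem_univ j))
  have h1 : μ * v i = ∑ j, (Q i j : ℂ) * v j := by
    have := congrFun heq i
    simp only [Matrix.mulVec, dotProduct, Matrix.map_apply, Pi.smul_apply,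
      smul_eq_mul] at this
    rw [← this]
  have h2 : ‖μ‖ * ‖v i‖ ≤ r * ‖v i‖ := by
    calc ‖μ‖ * ‖v i‖ = ‖μ * v i‖ := (norm_mul _ _).symm
      _ = ‖∑ j, (Q i j : ℂ) * v j‖ := by rw [h1]
      _ ≤ ∑ j, ‖(Q i j : ℂ) * v j‖ := norm_sum_le _ _
      _ = ∑ j, Q i j * ‖v j‖ := by
          refine Finset.sum_congr rfl fun j _ => ?_
          rw [norm_mul, Complex.norm_real, Real.norm_of_nonneg (hnonneg i j)]
      _ ≤ ∑ j, Q i j * ‖v i‖ := by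
          refine Finset.sum_le_sum fun j _ => ?_
          exact mul_le_mul_of_nonneg_left (hi.2 j (Finset.mem_univ j)) (hnonneg i j)
      _ = r * ‖v i‖ := by rw [← Finset.sum_mul, hrow i]
  exact le_of_mul_le_mul_right h2 hvi

/-- A real square matrix with nonnegative entries all of whose row sums equal `r`
has spectral radius `r` (as a complex matrix). -/
theorem spectralRadius_eq_of_row_sums_eq
    {n : Type*} [Fintype n] [DecidableEq n] [Nonempty n]
    (r : ℝ) (Q : Matrix n n ℝ) (hnonneg : ∀ i j, 0 ≤ Q i j)
    (hrow : ∀ i, ∑ j, Q i j = r) :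
    spectralRadius ℂ (Q.map (fun x => (x : ℂ))) = ENNReal.ofReal r := by
  set M := Q.map (fun x => (x : ℂ)) with hM
  have hr0 : 0 ≤ r := by
    rw [← hrow (Classical.arbitrary n)]
    exact Finset.sum_nonneg fun j _ => hnonneg _ j
  have hspec : ∀ μ ∈ spectrum ℂ M, ‖μ‖ ≤ r := by
    intro μ hμ
    rw [← AlgEquiv.spectrum_eq (Matrix.toLinAlgEquiv' (R := ℂ) (n := n)) M,
      ← Module.End.hasEigenvalue_iff_mem_spectrum] at hμ
    obtain ⟨v, hv⟩ := hμ.exists_hasEigenvector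
    have h1 : M.mulVec v = μ • v := by
      have := hv.apply_eq_smul
      rwa [show (Matrix.toLinAlgEquiv' M) v = M.mulVec v from Matrix.toLinAlgEquiv'_apply M v] at this
    exact norm_le_of_eigen r Q hnonneg hrow μ v hv.2 h1
  have hmem : (r : ℂ) ∈ spectrum ℂ M := by
    rw [← AlgEquiv.spectrum_eq (Matrix.toLinAlgEquiv' (R := ℂ) (n := n)) M,
      ← Module.End.hasEigenvalue_iff_mem_spectrum]
    apply Module.End.hasEigenvalue_of_hasEigenvector (x := fun _ => (1 : ℂ))
    constructor
    · rw [Module.End.mem_eigenspace_iff]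
      have h1 : M.mulVec (fun _ => (1 : ℂ)) = (r : ℂ) • (fun _ => (1 : ℂ)) := by
        funext i
        simp only [Matrix.mulVec, dotProduct, Matrix.map_apply, Pi.smul_apply,
          smul_eq_mul, mul_one]
        push_cast [← hrow i]
        rfl
      show Matrix.toLinAlgEquiv' M _ = _
      rw [Matrix.toLinAlgEquiv'_apply]
      exact h1
    · intro h
      have := congrFun h (Classical.arbitrary n)
      simp at this
  apply le_antisymm
  · refine iSup₂_le fun μ hμ => ?_
    rw [← ENNReal.ofReal_coe_nnreal, coe_nnnorm]
    exact ENNReal.ofReal_le_ofReal (hspec μ hμ)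
  · have := le_iSup₂ (f := fun μ (_ : μ ∈ spectrum ℂ M) => (‖μ‖₊ : ENNReal)) (r : ℂ) hmem
    calc ENNReal.ofReal r = (‖(r : ℂ)‖₊ : ENNReal) := by
          rw [← ENNReal.ofReal_coe_nnreal, coe_nnnorm, Complex.norm_real,
            Real.norm_of_nonneg hr0]
      _ ≤ _ := this
end

section
/- Let n ≥ 1 and let Q : Matrix (Fin (n+1)) (Fin (n+1)) ℂ be the adjacency matrix of the graph L̃_n: Q i j = 1 if the natural-number values of i and j differ by exactly 1, Q 0 0 = 1 and Q n n = 1 (loops at the two end vertices), and all other entries are 0. Then spectralRadius ℂ Q = 2. -/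
open Matrix

/-- The adjacency matrix of the graph `L̃_n` (for `n ≥ 1`) has spectral radius `2`.
The graph `L̃_n` has vertices `0, 1, …, n`, an edge between each pair of consecutive
vertices, and one loop at vertex `0` and one loop at vertex `n`. -/
theorem spectralRadius_Ltilde_eq_two
    (n : ℕ) (hn : 1 ≤ n)
    (Q : Matrix (Fin (n + 1)) (Fin (n + 1)) ℂ)
    (hQ : ∀ i j : Fin (n + 1), Q i j =
      if (i.val + 1 = j.val ∨ j.val + 1 = i.val) ∨ (i = j ∧ (i.val = 0 ∨ i.val = n))
      then 1 else 0) :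
    spectralRadius ℂ Q = 2 := by
  classical
  -- For each row `k`, the nonzero entries are exactly at columns `a k` and `b k`.
  have hQ' : ∀ k j : Fin (n + 1),
      Q k j = if j = (⟨k.val - 1, by omega⟩ : Fin (n + 1)) ∨
          j = (⟨min (k.val + 1) n, by omega⟩ : Fin (n + 1)) then 1 else 0 := by
    intro k j
    have hk := k.isLt
    have hj := j.isLt
    have hiff : ((k.val + 1 = j.val ∨ j.val + 1 = k.val) ∨
        (k = j ∧ (k.val = 0 ∨ k.val = n))) ↔
        (j = (⟨k.val - 1, by omega⟩ : Fin (n + 1)) ∨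
          j = (⟨min (k.val + 1) n, by omega⟩ : Fin (n + 1))) := by
      simp only [Fin.ext_iff]
      omega
    rw [hQ k j, if_congr hiff rfl rfl]
  have key : ∀ (α : Type) [inst : NormedField α] (f : Fin (n + 1) → α) (k : Fin (n + 1)),
      (∀ j : Fin (n + 1), f j = if j = (⟨k.val - 1, by omega⟩ : Fin (n + 1)) ∨
          j = (⟨min (k.val + 1) n, by omega⟩ : Fin (n + 1)) then 1 else 0) →
      ∑ j, f j = 2 := by
    intro α _ f k hf
    have hk := k.isLt
    set a : Fin (n + 1) := ⟨k.val - 1, by omega⟩ with ha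
    set b : Fin (n + 1) := ⟨min (k.val + 1) n, by omega⟩ with hb
    have hab : a ≠ b := by
      simp only [ha, hb, ne_eq, Fin.mk.injEq]
      omega
    have hsub : ∑ j ∈ ({a, b} : Finset (Fin (n + 1))), f j = ∑ j, f j := by
      refine Finset.sum_subset (Finset.subset_univ _) ?_
      intro j _ hj
      rw [hf j, if_neg]
      simpa using hj
    rw [← hsub, Finset.sum_pair hab, hf a, hf b, if_pos (Or.inl rfl), if_pos (Or.inr rfl)]
    norm_num
  -- each row of `Q` sums to `2`
  have hrow : ∀ k : Fin (n + 1), ∑ j, Q k j = 2 := fun k =>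
    key ℂ (fun j => Q k j) k (fun j => hQ' k j)
  -- the norms in each row also sum to `2`
  have hrownorm : ∀ k : Fin (n + 1), ∑ j, ‖Q k j‖ = 2 := by
    intro k
    refine key ℝ (fun j => ‖Q k j‖) k ?_
    intro j
    show ‖Q k j‖ = _
    have hk := k.isLt
    rw [hQ' k j]
    by_cases h : j = (⟨k.val - 1, by omega⟩ : Fin (n + 1)) ∨
        j = (⟨min (k.val + 1) n, by omega⟩ : Fin (n + 1))
    · rw [if_pos h, if_pos h]; simp
    · rw [if_neg h, if_neg h]; simp
  -- `2` is an eigenvalue, witnessed by the all-ones vector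
  have h2 : Module.End.HasEigenvalue (Matrix.toLin' Q) (2 : ℂ) := by
    apply Module.End.hasEigenvalue_of_hasEigenvector
        (x := (fun _ => 1 : Fin (n + 1) → ℂ))
    constructor
    · rw [Module.End.mem_eigenspace_iff]
      funext i
      simp only [Matrix.toLin'_apply, Matrix.mulVec, dotProduct, mul_one, Pi.smul_apply,
        smul_eq_mul, mul_one]
      exact hrow i
    · intro h
      have := congrFun h 0
      simp at this
  -- relate the spectrum of the matrix to eigenvalues of the linear map
  have hspec : ∀ μ : ℂ, μ ∈ spectrum ℂ Q ↔
      Module.End.HasEigenvalue (Matrix.toLin' Q) μ := by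
    intro μ
    rw [← AlgEquiv.spectrum_eq (Matrix.toLinAlgEquiv' :
        Matrix (Fin (n + 1)) (Fin (n + 1)) ℂ ≃ₐ[ℂ] _) Q,
      ← Module.End.hasEigenvalue_iff_mem_spectrum]
    rfl
  -- every eigenvalue has norm at most 2 (Gershgorin)
  have hbound : ∀ μ ∈ spectrum ℂ Q, ‖μ‖ ≤ 2 := by
    intro μ hμ
    obtain ⟨k, hk⟩ := eigenvalue_mem_ball ((hspec μ).mp hμ)
    rw [Metric.mem_closedBall, dist_eq_norm] at hk
    have h1 : ‖μ‖ ≤ ‖μ - Q k k‖ + ‖Q k k‖ := by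
      calc ‖μ‖ = ‖μ - Q k k + Q k k‖ := by ring_nf
        _ ≤ ‖μ - Q k k‖ + ‖Q k k‖ := norm_add_le _ _
    have h2' : ‖Q k k‖ + ∑ j ∈ Finset.univ.erase k, ‖Q k j‖ = ∑ j, ‖Q k j‖ :=
      Finset.add_sum_erase Finset.univ (fun j => ‖Q k j‖) (Finset.mem_univ k)
    calc ‖μ‖ ≤ ‖μ - Q k k‖ + ‖Q k k‖ := h1
      _ ≤ (∑ j ∈ Finset.univ.erase k, ‖Q k j‖) + ‖Q k k‖ := by linarith
      _ = ∑ j, ‖Q k j‖ := by rw [← h2']; ring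
      _ = 2 := hrownorm k
  -- conclude
  have h2mem : (2 : ℂ) ∈ spectrum ℂ Q := (hspec 2).mpr h2
  apply le_antisymm
  · rw [spectralRadius]
    refine iSup₂_le fun μ hμ => ?_
    have := hbound μ hμ
    have h2 : ‖μ‖₊ ≤ (2 : NNReal) := by
      rw [← NNReal.coe_le_coe]
      simpa using this
    calc (‖μ‖₊ : ENNReal) ≤ ((2 : NNReal) : ENNReal) := ENNReal.coe_le_coe.mpr h2
      _ = 2 := by norm_num
  · have : ((2 : ENNReal)) = (‖(2 : ℂ)‖₊ : ENNReal) := by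
      simp
    rw [this, spectralRadius]
    exact le_iSup₂ (f := fun (k : ℂ) (_ : k ∈ spectrum ℂ Q) => (‖k‖₊ : ENNReal)) 2 h2mem
end
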